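/- Every formula derivable with the empty assumption set in the paper's natural deduction calculus is a tautology, i.e., if ∅ ⊢ φ is derivable using the rules A, ∧I, ∧E, ∨I, ∨E, →I, →E, ¬I, ¬E, ↔I, ↔E, then φ is true under every truth assignment. -/
import Mathlib


/-- Propositional formulae built from atoms with ¬, ∧, ∨, →, ↔. -/
inductive PF (α : Type) : Type
  | atom : α → PF α
  | neg : PF α → PF α
  | conj : PF α → PF α → PF α
  | disj : PF α → PF α → PF α
  | imp : PF α → PF α → PF α
  | biimp : PF α → PF α → PF α
deriving DecidableEq

/-- Classical truth-value semantics under an assignment `v`. -/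
def PF.eval {α : Type} (v : α → Bool) : PF α → Bool
  | .atom a => v a
  | .neg φ => !(φ.eval v)
  | .conj φ ψ => φ.eval v && ψ.eval v
  | .disj φ ψ => φ.eval v || ψ.eval v
  | .imp φ ψ => !(φ.eval v) || ψ.eval v
  | .biimp φ ψ => φ.eval v == ψ.eval v

/-- The paper's natural deduction calculus: judgments `Γ ⊢ φ` with `Γ` a finite
set of formulae; `Γ ∪ {φ}` is written `insert φ Γ`. -/
inductive Deriv {α : Type} [DecidableEq α] : Finset (PF α) → PF α → Prop
  /-- A: `{φ} ⊢ φ` -/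
  | ax (φ : PF α) : Deriv {φ} φ
  /-- ∧I: from `Γ ⊢ ψ` and `Σ ⊢ φ` infer `Γ ∪ Σ ⊢ φ ∧ ψ` -/
  | andI {Γ S φ ψ} : Deriv Γ ψ → Deriv S φ → Deriv (Γ ∪ S) (.conj φ ψ)
  /-- ∧E_l: from `Γ ⊢ φ ∧ ψ` infer `Γ ⊢ φ` -/
  | andEl {Γ φ ψ} : Deriv Γ (.conj φ ψ) → Deriv Γ φ
  /-- ∧E_r: from `Γ ⊢ φ ∧ ψ` infer `Γ ⊢ ψ` -/
  | andEr {Γ φ ψ} : Deriv Γ (.conj φ ψ) → Deriv Γ ψ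
  /-- ∨I_l: from `Γ ⊢ φ` infer `Γ ⊢ ψ ∨ φ` -/
  | orIl {Γ φ ψ} : Deriv Γ φ → Deriv Γ (.disj ψ φ)
  /-- ∨I_r: from `Γ ⊢ φ` infer `Γ ⊢ φ ∨ ψ` -/
  | orIr {Γ φ ψ} : Deriv Γ φ → Deriv Γ (.disj φ ψ)
  /-- ∨E: from `Δ ⊢ ψ ∨ φ`, `Γ ∪ {ψ} ⊢ χ`, `Σ ∪ {φ} ⊢ χ` infer `Δ ∪ Γ ∪ Σ ⊢ χ` -/
  | orE {Δ Γ S φ ψ χ} : Deriv Δ (.disj ψ φ) → Deriv (insert ψ Γ) χ →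
      Deriv (insert φ S) χ → Deriv (Δ ∪ Γ ∪ S) χ
  /-- →I: from `Γ ∪ {φ} ⊢ ψ` infer `Γ ⊢ φ → ψ` -/
  | impI {Γ φ ψ} : Deriv (insert φ Γ) ψ → Deriv Γ (.imp φ ψ)
  /-- →E: from `Γ ⊢ φ` and `Σ ⊢ φ → ψ` infer `Γ ∪ Σ ⊢ ψ` -/
  | impE {Γ S φ ψ} : Deriv Γ φ → Deriv S (.imp φ ψ) → Deriv (Γ ∪ S) ψ
  /-- ¬I: from `Γ ∪ {φ} ⊢ ψ` and `Σ ⊢ ¬ψ` infer `Γ ∪ Σ ⊢ ¬φ` -/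
  | negI {Γ S φ ψ} : Deriv (insert φ Γ) ψ → Deriv S (.neg ψ) → Deriv (Γ ∪ S) (.neg φ)
  /-- ¬E: from `Γ ∪ {¬φ} ⊢ ψ` and `Σ ⊢ ¬ψ` infer `Γ ∪ Σ ⊢ φ` -/
  | negE {Γ S φ ψ} : Deriv (insert (.neg φ) Γ) ψ → Deriv S (.neg ψ) → Deriv (Γ ∪ S) φ
  /-- ↔I: from `Γ ∪ {φ} ⊢ ψ` and `Σ ∪ {ψ} ⊢ φ` infer `Γ ∪ Σ ⊢ φ ↔ ψ` -/
  | iffI {Γ S φ ψ} : Deriv (insert φ Γ) ψ → Deriv (insert ψ S) φ →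
      Deriv (Γ ∪ S) (.biimp φ ψ)
  /-- ↔E_l: from `Γ ⊢ φ` and `Σ ⊢ φ ↔ ψ` infer `Γ ∪ Σ ⊢ ψ` -/
  | iffEl {Γ S φ ψ} : Deriv Γ φ → Deriv S (.biimp φ ψ) → Deriv (Γ ∪ S) ψ
  /-- ↔E_r: from `Γ ⊢ ψ` and `Σ ⊢ φ ↔ ψ` infer `Γ ∪ Σ ⊢ φ` -/
  | iffEr {Γ S φ ψ} : Deriv Γ ψ → Deriv S (.biimp φ ψ) → Deriv (Γ ∪ S) φ

theorem deriv_sound {α : Type} [DecidableEq α] {Γ : Finset (PF α)} {φ : PF α}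
    (h : Deriv Γ φ) (v : α → Bool) (hΓ : ∀ ψ ∈ Γ, ψ.eval v = true) :
    φ.eval v = true := by
  induction h with
  | ax φ => exact hΓ φ (Finset.mem_singleton_self φ)
  | andI _ _ ih1 ih2 =>
    simp only [Finset.mem_union] at hΓ
    simp [PF.eval, ih1 fun ψ h => hΓ ψ (Or.inl h), ih2 fun ψ h => hΓ ψ (Or.inr h)]
  | andEl _ ih => have := ih hΓ; simp [PF.eval] at this ⊢; exact this.1
  | andEr _ ih => have := ih hΓ; simp [PF.eval] at this ⊢; exact this.2
  | orIl _ ih => simp [PF.eval, ih hΓ]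
  | orIr _ ih => simp [PF.eval, ih hΓ]
  | orE _ _ _ ih1 ih2 ih3 =>
    simp only [Finset.mem_union] at hΓ
    have hd := ih1 fun ψ h => hΓ ψ (Or.inl (Or.inl h))
    simp only [PF.eval, Bool.or_eq_true] at hd
    rcases hd with hd | hd
    · exact ih2 ((Finset.forall_mem_insert _ _ _).mpr
        ⟨hd, fun ψ h => hΓ ψ (Or.inl (Or.inr h))⟩)
    · exact ih3 ((Finset.forall_mem_insert _ _ _).mpr
        ⟨hd, fun ψ h => hΓ ψ (Or.inr h)⟩)
  | impI _ ih =>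
    rename_i φ' ψ' _
    simp only [PF.eval, Bool.or_eq_true, Bool.not_eq_true']
    by_cases hφ : φ'.eval v = true
    · exact Or.inr (ih ((Finset.forall_mem_insert _ _ _).mpr ⟨hφ, hΓ⟩))
    · exact Or.inl (by simpa using hφ)
  | impE _ _ ih1 ih2 =>
    simp only [Finset.mem_union] at hΓ
    have h1 := ih1 fun ψ h => hΓ ψ (Or.inl h)
    have h2 := ih2 fun ψ h => hΓ ψ (Or.inr h)
    simp [PF.eval, h1] at h2; exact h2
  | negI _ _ ih1 ih2 =>
    simp only [Finset.mem_union] at hΓ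
    have h2 := ih2 fun ψ h => hΓ ψ (Or.inr h)
    simp only [PF.eval, Bool.not_eq_true'] at h2 ⊢
    by_contra hφ
    simp only [Bool.not_eq_false] at hφ
    have := ih1 ((Finset.forall_mem_insert _ _ _).mpr
      ⟨hφ, fun ψ h => hΓ ψ (Or.inl h)⟩)
    simp [this] at h2
  | negE _ _ ih1 ih2 =>
    simp only [Finset.mem_union] at hΓ
    have h2 := ih2 fun ψ h => hΓ ψ (Or.inr h)
    simp only [PF.eval, Bool.not_eq_true'] at h2
    by_contra hφ
    rename_i φ' ψ' _ _
    have hn : (PF.neg φ').eval v = true := by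
      simp only [PF.eval, Bool.not_eq_true']; simpa using hφ
    have := ih1 ((Finset.forall_mem_insert _ _ _).mpr
      ⟨hn, fun ψ h => hΓ ψ (Or.inl h)⟩)
    simp [this] at h2
  | iffI _ _ ih1 ih2 =>
    rename_i φ' ψ' _ _
    simp only [Finset.mem_union] at hΓ
    simp only [PF.eval, beq_iff_eq]
    by_cases hφ : φ'.eval v = true
    · rw [hφ, ih1 ((Finset.forall_mem_insert _ _ _).mpr
        ⟨hφ, fun ψ h => hΓ ψ (Or.inl h)⟩)]
    · by_cases hψ : ψ'.eval v = true
      · exact absurd (ih2 ((Finset.forall_mem_insert _ _ _).mpr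
          ⟨hψ, fun ψ h => hΓ ψ (Or.inr h)⟩)) hφ
      · simp only [Bool.not_eq_true] at hφ hψ; rw [hφ, hψ]
  | iffEl _ _ ih1 ih2 =>
    simp only [Finset.mem_union] at hΓ
    have h1 := ih1 fun ψ h => hΓ ψ (Or.inl h)
    have h2 := ih2 fun ψ h => hΓ ψ (Or.inr h)
    simp only [PF.eval, beq_iff_eq] at h2
    rw [← h2, h1]
  | iffEr _ _ ih1 ih2 =>
    simp only [Finset.mem_union] at hΓ
    have h1 := ih1 fun ψ h => hΓ ψ (Or.inl h)
    have h2 := ih2 fun ψ h => hΓ ψ (Or.inr h)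
    simp only [PF.eval, beq_iff_eq] at h2
    rw [h2, h1]

/-- Every formula derivable with the empty assumption set in the
paper's natural deduction calculus is a tautology: it evaluates to true under
every truth assignment. -/
theorem deriv_empty_tautology {α : Type} [DecidableEq α] (φ : PF α)
    (h : Deriv (∅ : Finset (PF α)) φ) :
    ∀ v : α → Bool, φ.eval v = true := by
  exact fun v => deriv_sound h v (by simp)
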